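/- Let G be a finite connected simple graph, let 𝒫 = (X_1,…,X_d) be a path decomposition of G, and let 𝒢 be the derived graph of G and 𝒫. Let C_1 ⊆ C_2 ⊆ … ⊆ C_m be subsets of V(𝒢) such that C_1 = {v} for some vertex v of 𝒢, C_m = V(𝒢), and C_j \ C_{j−1} ⊆ N_𝒢(C_{j−1}) for every j = 2,…,m. Define B_1 = C_1, B_j = δ(C_j) ∪ (C_j \ C_{j−1}) for j = 2,…,m, and Z_j = ⋃_{v_i(H) ∈ B_j} V(H) for j = 1,…,m. Then (Z_1,…,Z_m) is a connected path decomposition of G. -/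

import Mathlib

open SimpleGraph

/-- A path decomposition of `G` with bags `X 0, …, X (d-1)`. -/
def IsPathDecomp {V : Type*} (G : SimpleGraph V) {d : ℕ} (X : Fin d → Finset V) : Prop :=
  (∀ v : V, ∃ i, v ∈ X i) ∧
  (∀ u v : V, G.Adj u v → ∃ i, u ∈ X i ∧ v ∈ X i) ∧
  (∀ i j k : Fin d, i ≤ j → j ≤ k → ∀ v : V, v ∈ X i → v ∈ X k → v ∈ X j)

/-- Vertices of the derived graph: pairs `(i, H)` where `H` is a connected component of
the subgraph of `G` induced by the bag `X i`. -/
def DVert {V : Type*} (G : SimpleGraph V) {d : ℕ} (X : Fin d → Finset V) : Type _ :=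
  Σ i : Fin d, (G.induce (X i : Set V)).ConnectedComponent

/-- The set `V(H) ⊆ V(G)` of vertices of the component represented by a derived vertex. -/
def dsupp {V : Type*} (G : SimpleGraph V) {d : ℕ} (X : Fin d → Finset V)
    (x : DVert G X) : Set V :=
  {v | ∃ h : v ∈ (X x.1 : Set V),
    (G.induce (X x.1 : Set V)).connectedComponentMk ⟨v, h⟩ = x.2}

/-- The derived graph `𝒢` of `G` and the path decomposition `X`: vertices in consecutive
layers are adjacent exactly when their components share a vertex of `G`.
(Layers are numbered `1, …, d`; a vertex `x` lies in layer `x.1 + 1`.) -/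
def derived {V : Type*} (G : SimpleGraph V) {d : ℕ} (X : Fin d → Finset V) :
    SimpleGraph (DVert G X) where
  Adj a b := ((a.1 : ℕ) + 1 = (b.1 : ℕ) ∨ (b.1 : ℕ) + 1 = (a.1 : ℕ)) ∧
    (dsupp G X a ∩ dsupp G X b).Nonempty
  symm := ⟨by
    rintro a b ⟨h1, h2⟩
    exact ⟨h1.symm, by rwa [Set.inter_comm]⟩⟩
  loopless := ⟨by
    rintro a ⟨h1, -⟩
    rcases h1 with h | h <;> omega⟩

/-- The layer `V_i` of the derived graph (`1`-based: `V_i = {x | x.1 + 1 = i}`). -/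
def layer {V : Type*} (G : SimpleGraph V) {d : ℕ} (X : Fin d → Finset V) (i : ℕ) :
    Set (DVert G X) :=
  {x | (x.1 : ℕ) + 1 = i}

/-- The border `δ(C)`: vertices of `C` with a neighbor outside `C`. -/
def border {V : Type*} (G : SimpleGraph V) {d : ℕ} (X : Fin d → Finset V)
    (C : Set (DVert G X)) : Set (DVert G X) :=
  {x | x ∈ C ∧ ∃ y, (derived G X).Adj x y ∧ y ∉ C}

/-- The neighborhood `N_𝒢(S)`: vertices outside `S` adjacent to some vertex of `S`. -/
def nbhd {V : Type*} (G : SimpleGraph V) {d : ℕ} (X : Fin d → Finset V)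
    (S : Set (DVert G X)) : Set (DVert G X) :=
  {u | u ∉ S ∧ ∃ x ∈ S, (derived G X).Adj u x}

/-- The weight of a set of derived vertices: `ω(S) = Σ_{x∈S} |V(H_x)|`. -/
noncomputable def wsum {V : Type*} (G : SimpleGraph V) {d : ℕ} (X : Fin d → Finset V)
    (S : Set (DVert G X)) : ℕ :=
  ∑ᶠ x ∈ S, (dsupp G X x).ncard

/-- The right extremity `r(S)` (`1`-based); `r(∅) = 0` by convention. -/
noncomputable def rIdx {V : Type*} (G : SimpleGraph V) {d : ℕ} (X : Fin d → Finset V)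
    (S : Set (DVert G X)) : ℕ :=
  sSup {n | ∃ x ∈ S, (x.1 : ℕ) + 1 = n}

/-- The left extremity `l(S)` (`1`-based); `l(∅) = d + 1` by convention. -/
noncomputable def lIdx {V : Type*} (G : SimpleGraph V) {d : ℕ} (X : Fin d → Finset V)
    (S : Set (DVert G X)) : ℕ :=
  sInf ({n | ∃ x ∈ S, (x.1 : ℕ) + 1 = n} ∪ {d + 1})

/-- `(BL, BR)` is a border partition of `C`: disjoint sets whose union is `δ(C)`,
with `BL ⊆ V_1 ∪ … ∪ V_i` and `BR ⊆ V_{i+1} ∪ … ∪ V_d` for some `0 ≤ i ≤ d`. -/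
def IsBorderPartition {V : Type*} (G : SimpleGraph V) {d : ℕ} (X : Fin d → Finset V)
    (C BL BR : Set (DVert G X)) : Prop :=
  Disjoint BL BR ∧ border G X C = BL ∪ BR ∧
    ∃ i : ℕ, i ≤ d ∧ (∀ x ∈ BL, (x.1 : ℕ) + 1 ≤ i) ∧ (∀ x ∈ BR, i + 1 ≤ (x.1 : ℕ) + 1)

/-- `u` and `w` are connected by a progressive path of `𝒢`
(a path meeting each layer at most once). -/
def ProgConn {V : Type*} (G : SimpleGraph V) {d : ℕ} (X : Fin d → Finset V)
    (u w : DVert G X) : Prop :=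
  ∃ p : (derived G X).Walk u w, ∀ a ∈ p.support, ∀ b ∈ p.support, a.1 = b.1 → a = b

/-- The vertex set of the left branch `branch_L(C, i)`: `BL` together with all
`v ∈ V_k \ C`, `i ≤ k < r(BL)`, joined by a progressive path to some `x ∈ V_j ∩ BL`, `k < j`. -/
def branchL {V : Type*} (G : SimpleGraph V) {d : ℕ} (X : Fin d → Finset V)
    (C BL : Set (DVert G X)) (i : ℕ) : Set (DVert G X) :=
  BL ∪ {v | v ∉ C ∧ i ≤ (v.1 : ℕ) + 1 ∧ (v.1 : ℕ) + 1 < rIdx G X BL ∧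
    ∃ x ∈ BL, (v.1 : ℕ) < (x.1 : ℕ) ∧ ProgConn G X v x}

/-- The vertex set of the right branch `branch_R(C, i)`: `BR` together with all
`v ∈ V_k \ C`, `l(BR) < k ≤ i`, joined by a progressive path to some `x ∈ V_j ∩ BR`, `j < k`. -/
def branchR {V : Type*} (G : SimpleGraph V) {d : ℕ} (X : Fin d → Finset V)
    (C BR : Set (DVert G X)) (i : ℕ) : Set (DVert G X) :=
  BR ∪ {v | v ∉ C ∧ lIdx G X BR < (v.1 : ℕ) + 1 ∧ (v.1 : ℕ) + 1 ≤ i ∧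
    ∃ x ∈ BR, (x.1 : ℕ) < (v.1 : ℕ) ∧ ProgConn G X v x}

/-- The external vertices of a branch with vertex set `S` (relative to `C`):
vertices of `S` with a neighbor outside `C ∪ S`. -/
def extSet {V : Type*} (G : SimpleGraph V) {d : ℕ} (X : Fin d → Finset V)
    (C S : Set (DVert G X)) : Set (DVert G X) :=
  {v | v ∈ S ∧ ∃ u, (derived G X).Adj v u ∧ u ∉ C ∪ S}

/-- The left branch `branch_L(C, i)` is proper: no external vertices in layers `> i`. -/
def ProperL {V : Type*} (G : SimpleGraph V) {d : ℕ} (X : Fin d → Finset V)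
    (C BL : Set (DVert G X)) (i : ℕ) : Prop :=
  ∀ v ∈ extSet G X C (branchL G X C BL i), (v.1 : ℕ) + 1 ≤ i

/-- The right branch `branch_R(C, i)` is proper: no external vertices in layers `< i`. -/
def ProperR {V : Type*} (G : SimpleGraph V) {d : ℕ} (X : Fin d → Finset V)
    (C BR : Set (DVert G X)) (i : ℕ) : Prop :=
  ∀ v ∈ extSet G X C (branchR G X C BR i), i ≤ (v.1 : ℕ) + 1

/-!
Every derived vertex lies in the bag `B p` of the step `p` at which it enters the expansion,
so `B 0 ∪ … ∪ B j = C j`. Covering and the edge condition follow, and `Z 0 ∪ … ∪ Z j` is the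
union of the components in `C j`, which is connected because every component added to the
expansion meets a component already in it. For the interpolation property, the bags containing
a vertex `u` of `G` form an interval of layers, so the components containing `u` form a path in
the derived graph; if `u ∈ Z i ∩ Z k` with `i < j < k`, this path meets `C j` and either leaves
it or ends at a vertex of `B k` inside `C j`, and in both cases it passes through `δ(C j) ⊆ B j`.
-/

namespace SimpleGraph

variable {V : Type*} {G : SimpleGraph V}

lemma induce_biUnion_connected_of_inter_nonempty {ι : Type*} {f : ι → Set V} {S T : Set ι}
    (hST : S ⊆ T) (hS : (G.induce (⋃ i ∈ S, f i)).Connected)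
    (hT : ∀ i ∈ T \ S, (G.induce (f i)).Preconnected ∧ ∃ j ∈ S, (f i ∩ f j).Nonempty) :
    (G.induce (⋃ i ∈ T, f i)).Connected := by
  have hsub : (⋃ i ∈ S, f i) ⊆ ⋃ i ∈ T, f i := Set.biUnion_subset_biUnion_left hST
  obtain ⟨⟨u, hu⟩⟩ := hS.nonempty
  refine G.induce_connected_of_patches u (hsub hu) fun {w} hw => ?_
  obtain ⟨i, hiT, hwi⟩ := Set.mem_iUnion₂.mp hw
  by_cases hiS : i ∈ S
  · exact ⟨_, hsub, hu, Set.mem_biUnion hiS hwi, hS.preconnected _ _⟩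
  obtain ⟨hfi, j, hjS, hij⟩ := hT i ⟨hiT, hiS⟩
  have hmeet : ((⋃ i ∈ S, f i) ∩ f i).Nonempty :=
    hij.mono fun z hz => ⟨Set.mem_biUnion hjS hz.2, hz.1⟩
  exact ⟨_, Set.union_subset hsub (Set.subset_biUnion_of_mem hiT), Or.inl hu, Or.inr hwi,
    (induce_union_connected hS.preconnected hfi hmeet).preconnected _ _⟩

end SimpleGraph

section Chain

variable {α : Type*} {m : ℕ} {C B : ℕ → Set α}

lemma subset_of_le_of_subset_succ (hmono : ∀ j, j + 1 < m → C j ⊆ C (j + 1)) {p q : ℕ}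
    (hpq : p ≤ q) (hq : q < m) : C p ⊆ C q := by
  induction q, hpq using Nat.le_induction with
  | base => exact subset_rfl
  | succ q _ ih => exact (ih (by omega)).trans (hmono q hq)

lemma biUnion_le_eq_of_subset_succ (hmono : ∀ j, j + 1 < m → C j ⊆ C (j + 1))
    (hB0 : B 0 = C 0) (hBC : ∀ j < m, B j ⊆ C j)
    (hnew : ∀ j, j + 1 < m → C (j + 1) \ C j ⊆ B (j + 1)) :
    ∀ j < m, ⋃ p ≤ j, B p = C j := by
  intro j hj
  induction j with
  | zero => simp [hB0]
  | succ j ih =>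
    rw [Set.biUnion_le_succ, ih (by omega)]
    refine (Set.union_subset (hmono j hj) (hBC _ hj)).antisymm fun x hx => ?_
    by_cases hxj : x ∈ C j
    · exact Or.inl hxj
    · exact Or.inr (hnew j hj ⟨hx, hxj⟩)

end Chain

section Derived

variable {V : Type*} {G : SimpleGraph V} {d : ℕ} {X : Fin d → Finset V}

variable (G X) in
def compOf {i : Fin d} {u : V} (hu : u ∈ X i) : DVert G X :=
  ⟨i, (G.induce (X i : Set V)).connectedComponentMk ⟨u, hu⟩⟩

lemma mem_dsupp_compOf {i : Fin d} {u : V} (hu : u ∈ X i) : u ∈ dsupp G X (compOf G X hu) :=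
  ⟨hu, rfl⟩

lemma eq_compOf_of_mem_dsupp {x : DVert G X} {u : V} (hu : u ∈ dsupp G X x) :
    x = compOf G X hu.1 :=
  Sigma.ext rfl (heq_of_eq hu.2.symm)

lemma mem_dsupp_compOf_of_adj {i : Fin d} {u w : V} (hu : u ∈ X i) (hw : w ∈ X i)
    (huw : G.Adj u w) : w ∈ dsupp G X (compOf G X hu) :=
  ⟨hw, ConnectedComponent.connectedComponentMk_eq_of_adj (G := G.induce (X i : Set V))
    (v := ⟨w, hw⟩) (w := ⟨u, hu⟩) huw.symm⟩

lemma derived_adj_compOf {i j : Fin d} {u : V} (hi : u ∈ X i) (hj : u ∈ X j)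
    (hij : (i : ℕ) + 1 = j) : (derived G X).Adj (compOf G X hi) (compOf G X hj) :=
  ⟨Or.inl hij, u, mem_dsupp_compOf hi, mem_dsupp_compOf hj⟩

lemma connected_induce_dsupp (x : DVert G X) : (G.induce (dsupp G X x)).Connected := by
  let f : x.2.toSimpleGraph →g G.induce (dsupp G X x) :=
    { toFun := fun w => ⟨w.1.1, w.1.2, w.2⟩
      map_rel' := id }
  refine x.2.connected_toSimpleGraph.map f ?_
  rintro ⟨w, hw, hwx⟩
  exact ⟨⟨⟨w, hw⟩, hwx⟩, rfl⟩

lemma preconnected_induce_mem_dsupp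
    (hX3 : ∀ i j k : Fin d, i ≤ j → j ≤ k → ∀ v : V, v ∈ X i → v ∈ X k → v ∈ X j) (u : V) :
    ((derived G X).induce {x | u ∈ dsupp G X x}).Preconnected := by
  have step : ∀ (n : ℕ) (a b : Fin d) (ha : u ∈ X a) (hb : u ∈ X b), (b : ℕ) = a + n →
      ((derived G X).induce {x | u ∈ dsupp G X x}).Reachable
        ⟨compOf G X ha, mem_dsupp_compOf ha⟩ ⟨compOf G X hb, mem_dsupp_compOf hb⟩ := by
    intro n
    induction n with
    | zero =>
      intro a b ha hb hab
      obtain rfl : a = b := Fin.ext (by omega)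
      rfl
    | succ n ih =>
      intro a b ha hb hab
      let c : Fin d := ⟨a + n, by omega⟩
      have hc : u ∈ X c :=
        hX3 a c b (Fin.le_def.mpr (by simp [c])) (Fin.le_def.mpr (by simp [c]; omega)) u ha hb
      exact (ih a c ha hc rfl).trans
        (Adj.reachable (derived_adj_compOf hc hb (by simp [c]; omega)))
  have hcomp : ∀ (a b : Fin d) (ha : u ∈ X a) (hb : u ∈ X b),
      ((derived G X).induce {x | u ∈ dsupp G X x}).Reachable
        ⟨compOf G X ha, mem_dsupp_compOf ha⟩ ⟨compOf G X hb, mem_dsupp_compOf hb⟩ := by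
    intro a b ha hb
    rcases le_total a b with hab | hab
    · exact step (b - a) a b ha hb (by rw [Fin.le_def] at hab; omega)
    · exact (step (a - b) b a hb ha (by rw [Fin.le_def] at hab; omega)).symm
  rintro ⟨x, hx⟩ ⟨y, hy⟩
  rw [show (⟨x, hx⟩ : {x | u ∈ dsupp G X x}) = ⟨compOf G X hx.1, mem_dsupp_compOf hx.1⟩ from
      Subtype.ext (eq_compOf_of_mem_dsupp hx),
    show (⟨y, hy⟩ : {x | u ∈ dsupp G X x}) = ⟨compOf G X hy.1, mem_dsupp_compOf hy.1⟩ from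
      Subtype.ext (eq_compOf_of_mem_dsupp hy)]
  exact hcomp _ _ _ _

lemma exists_mem_border_of_mem_dsupp
    (hX3 : ∀ i j k : Fin d, i ≤ j → j ≤ k → ∀ v : V, v ∈ X i → v ∈ X k → v ∈ X j)
    {C : Set (DVert G X)} {x y : DVert G X} {u : V} (hx : x ∈ C) (hy : y ∉ C)
    (hux : u ∈ dsupp G X x) (huy : u ∈ dsupp G X y) :
    ∃ w ∈ border G X C, u ∈ dsupp G X w := by
  obtain ⟨p⟩ := preconnected_induce_mem_dsupp hX3 u ⟨x, hux⟩ ⟨y, huy⟩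
  obtain ⟨e, -, he, he'⟩ := p.exists_boundary_dart {z | z.1 ∈ C} hx hy
  exact ⟨e.fst, ⟨he, e.snd, e.adj, he'⟩, e.fst.2⟩

lemma mem_border_of_subset {C C' : Set (DVert G X)} {x : DVert G X} (hC : C ⊆ C')
    (hx : x ∈ C) (hx' : x ∈ border G X C') : x ∈ border G X C :=
  ⟨hx, hx'.2.imp fun _ hy => ⟨hy.1, fun h => hy.2 (hC h)⟩⟩

lemma connected_induce_biUnion_dsupp {m : ℕ} {C : ℕ → Set (DVert G X)} {v : DVert G X}
    (hC0 : C 0 = {v}) (hmono : ∀ j, j + 1 < m → C j ⊆ C (j + 1))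
    (hnbr : ∀ j, j + 1 < m → C (j + 1) \ C j ⊆ nbhd G X (C j)) :
    ∀ j < m, (G.induce (⋃ x ∈ C j, dsupp G X x)).Connected := by
  intro j hj
  induction j with
  | zero => rw [hC0, Set.biUnion_singleton]; exact connected_induce_dsupp v
  | succ j ih =>
    refine induce_biUnion_connected_of_inter_nonempty (hmono j hj) (ih (by omega))
      fun x hx => ⟨(connected_induce_dsupp x).preconnected, ?_⟩
    obtain ⟨-, y, hy, hxy⟩ := hnbr j hj hx
    exact ⟨y, hy, hxy.2⟩

lemma mem_biUnion_dsupp_of_lt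
    (hX3 : ∀ i j k : Fin d, i ≤ j → j ≤ k → ∀ v : V, v ∈ X i → v ∈ X k → v ∈ X j)
    {m : ℕ} {C B : ℕ → Set (DVert G X)} (hmono : ∀ j, j + 1 < m → C j ⊆ C (j + 1))
    (hB : ∀ j, 1 ≤ j → j < m → B j = border G X (C j) ∪ (C j \ C (j - 1)))
    {i j k : ℕ} (hij : i < j) (hjk : j < k) (hk : k < m) {u : V}
    (hui : u ∈ ⋃ x ∈ C i, dsupp G X x) (huk : u ∈ ⋃ y ∈ B k, dsupp G X y) :
    u ∈ ⋃ w ∈ B j, dsupp G X w := by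
  have hsub {p q : ℕ} := subset_of_le_of_subset_succ (p := p) (q := q) hmono
  rw [Set.mem_iUnion₂] at hui
  rw [Set.mem_iUnion₂, hB k (by omega) hk] at huk
  obtain ⟨x, hx, hux⟩ := hui
  obtain ⟨y, hy, huy⟩ := huk
  obtain ⟨w, hw, huw⟩ : ∃ w ∈ border G X (C j), u ∈ dsupp G X w := by
    by_cases hyj : y ∈ C j
    · refine ⟨y, ?_, huy⟩
      rcases hy with hy | hy
      · exact mem_border_of_subset (hsub hjk.le hk) hyj hy
      · exact absurd (hsub (by omega) (by omega) hyj) hy.2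
    · exact exists_mem_border_of_mem_dsupp hX3 (hsub hij.le (by omega) hx) hyj hux huy
  rw [hB j (by omega) (by omega)]
  exact Set.mem_biUnion (Or.inl hw) huw

end Derived

theorem scp_correctness_general {V : Type*} (G : SimpleGraph V)
    {d : ℕ} (X : Fin d → Finset V) (hX : IsPathDecomp G X)
    (m : ℕ) (hm : 1 ≤ m) (C B : ℕ → Set (DVert G X)) (Z : ℕ → Set V)
    (v : DVert G X) (hC0 : C 0 = {v}) (hCm : C (m - 1) = Set.univ)
    (hmono : ∀ j : ℕ, j + 1 < m → C j ⊆ C (j + 1))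
    (hnbr : ∀ j : ℕ, j + 1 < m → C (j + 1) \ C j ⊆ nbhd G X (C j))
    (hB0 : B 0 = C 0)
    (hB : ∀ j : ℕ, 1 ≤ j → j < m → B j = border G X (C j) ∪ (C j \ C (j - 1)))
    (hZ : ∀ j : ℕ, j < m → Z j = ⋃ x ∈ B j, dsupp G X x) :
    (∀ u : V, ∃ j < m, u ∈ Z j) ∧
    (∀ u w : V, G.Adj u w → ∃ j < m, u ∈ Z j ∧ w ∈ Z j) ∧
    (∀ i j k : ℕ, i ≤ j → j ≤ k → k < m → Z i ∩ Z k ⊆ Z j) ∧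
    (∀ j < m, (G.induce (⋃ p ∈ {p : ℕ | p ≤ j}, Z p)).Connected) := by
  obtain ⟨hcover, hedge, hX3⟩ := hX
  have hBC : ∀ j < m, B j ⊆ C j := by
    rintro (_ | j) hj
    · exact hB0.subset
    · rw [hB (j + 1) (by omega) hj]
      exact Set.union_subset (fun x hx => hx.1) Set.sdiff_subset
  have hunion := biUnion_le_eq_of_subset_succ hmono hB0 hBC fun j hj => by
    rw [hB (j + 1) (by omega) hj]; exact Set.subset_union_right
  have hbag : ∀ x, ∃ p < m, x ∈ B p := fun x => by
    have hx : x ∈ ⋃ p ≤ m - 1, B p := by rw [hunion (m - 1) (by omega), hCm]; trivial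
    obtain ⟨p, hp, hxp⟩ := Set.mem_iUnion₂.mp hx
    exact ⟨p, by omega, hxp⟩
  refine ⟨fun u => ?_, fun u w huw => ?_, ?_, fun j hj => ?_⟩
  · obtain ⟨i, hi⟩ := hcover u
    obtain ⟨p, hp, hxp⟩ := hbag (compOf G X hi)
    exact ⟨p, hp, hZ p hp ▸ Set.mem_biUnion hxp (mem_dsupp_compOf hi)⟩
  · obtain ⟨i, hu, hw⟩ := hedge u w huw
    obtain ⟨p, hp, hxp⟩ := hbag (compOf G X hu)
    exact ⟨p, hp, hZ p hp ▸ Set.mem_biUnion hxp (mem_dsupp_compOf hu),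
      hZ p hp ▸ Set.mem_biUnion hxp (mem_dsupp_compOf_of_adj hu hw huw)⟩
  · intro i j k hij hjk hk u ⟨hui, huk⟩
    rcases hij.eq_or_lt with rfl | hij
    · exact hui
    rcases hjk.eq_or_lt with rfl | hjk
    · exact huk
    rw [hZ i (by omega)] at hui
    rw [hZ k hk] at huk
    rw [hZ j (by omega)]
    exact mem_biUnion_dsupp_of_lt hX3 hmono hB hij hjk hk
      (Set.biUnion_subset_biUnion_left (hBC i (by omega)) hui) huk
  · have hZunion : (⋃ p ∈ {p : ℕ | p ≤ j}, Z p) = ⋃ x ∈ C j, dsupp G X x := by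
      rw [← hunion j hj,
        Set.iUnion₂_congr fun p (hp : p ∈ {p | p ≤ j}) => hZ p (lt_of_le_of_lt hp hj)]
      simp only [Set.biUnion_iUnion, Set.mem_ofPred_eq]
    rw [hZunion]
    exact connected_induce_biUnion_dsupp hC0 hmono hnbr j hj

/-- Correctness of the `SCP` construction: given a chain of expansions
`C 0 = {v} ⊆ C 1 ⊆ … ⊆ C (m-1) = V(𝒢)` in the derived graph, each step adding only
neighbors of the current expansion, the bags `Z j = ⋃_{x ∈ B j} V(H_x)` with
`B 0 = C 0` and `B j = δ(C j) ∪ (C j \ C (j-1))` form a connected path decomposition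
of `G`. -/
theorem scp_correctness {V : Type*} [Fintype V] (G : SimpleGraph V) (hG : G.Connected)
    {d : ℕ} (X : Fin d → Finset V) (hX : IsPathDecomp G X)
    (m : ℕ) (hm : 1 ≤ m) (C B : ℕ → Set (DVert G X)) (Z : ℕ → Set V)
    (v : DVert G X) (hC0 : C 0 = {v}) (hCm : C (m - 1) = Set.univ)
    (hmono : ∀ j : ℕ, j + 1 < m → C j ⊆ C (j + 1))
    (hnbr : ∀ j : ℕ, j + 1 < m → C (j + 1) \ C j ⊆ nbhd G X (C j))
    (hB0 : B 0 = C 0)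
    (hB : ∀ j : ℕ, 1 ≤ j → j < m → B j = border G X (C j) ∪ (C j \ C (j - 1)))
    (hZ : ∀ j : ℕ, j < m → Z j = ⋃ x ∈ B j, dsupp G X x) :
    (∀ u : V, ∃ j < m, u ∈ Z j) ∧
    (∀ u w : V, G.Adj u w → ∃ j < m, u ∈ Z j ∧ w ∈ Z j) ∧
    (∀ i j k : ℕ, i ≤ j → j ≤ k → k < m → Z i ∩ Z k ⊆ Z j) ∧
    (∀ j < m, (G.induce (⋃ p ∈ {p : ℕ | p ≤ j}, Z p)).Connected) :=
  scp_correctness_general G X hX m hm C B Z v hC0 hCm hmono hnbr hB0 hB hZ
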